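/- arXiv:1104.3939 — 5 statements merged into one kernel-verified Lean document; each statement's English description precedes it below -/
import Mathlib

section
/- For integers k > ℓ > 0, the polynomials f_{(4k+2ℓ, 2k+2ℓ, k+3ℓ)}(t) and f_{(4k-2ℓ, 2k-2ℓ, k-3ℓ)}(t) have the same largest real root greater than 1; equivalently, for real t > 1, f_{(4k+2ℓ, 2k+2ℓ, k+3ℓ)}(t) = 0 if and only if f_{(4k-2ℓ, 2k-2ℓ, k-3ℓ)}(t) = 0. -/
/-- `f_{(x,y,z)}(t) = t^(x+y-z) - t^x - t^y - t^(x-z) - t^(y-z) + 1`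
as a Laurent-type expression in a real variable `t`, with integer exponents. -/
noncomputable def magicF (x y z : ℤ) (t : ℝ) : ℝ :=
  t ^ (x + y - z) - t ^ x - t ^ y - t ^ (x - z) - t ^ (y - z) + 1

theorem stmt_2 (k ℓ : ℤ) (hℓ : 0 < ℓ) (hk : ℓ < k) (t : ℝ) (ht : 1 < t) :
    magicF (4 * k + 2 * ℓ) (2 * k + 2 * ℓ) (k + 3 * ℓ) t = 0 ↔
    magicF (4 * k - 2 * ℓ) (2 * k - 2 * ℓ) (k - 3 * ℓ) t = 0 := by
  have ht0 : (0:ℝ) < t := lt_trans one_pos ht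
  have hne : t ≠ 0 := ne_of_gt ht0
  have hsplit : ∀ m n : ℤ, t ^ (k * m + ℓ * n) = (t ^ k) ^ m * (t ^ ℓ) ^ n := by
    intro m n
    rw [zpow_add₀ hne, zpow_mul, zpow_mul]
  have hapos : 0 < t ^ k := zpow_pos ht0 k
  have hbpos : 0 < t ^ ℓ := zpow_pos ht0 ℓ
  have hane : t ^ k ≠ 0 := ne_of_gt hapos
  have hbne : t ^ ℓ ≠ 0 := ne_of_gt hbpos
  have h1 : magicF (4 * k + 2 * ℓ) (2 * k + 2 * ℓ) (k + 3 * ℓ) t =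
      (t ^ k) ^ 5 * (t ^ ℓ) - (t ^ k) ^ 4 * (t ^ ℓ) ^ 2 - (t ^ k) ^ 2 * (t ^ ℓ) ^ 2
        - (t ^ k) ^ 3 * (t ^ ℓ)⁻¹ - (t ^ k) * (t ^ ℓ)⁻¹ + 1 := by
    unfold magicF
    rw [show 4 * k + 2 * ℓ + (2 * k + 2 * ℓ) - (k + 3 * ℓ) = k * 5 + ℓ * 1 by ring,
      show 4 * k + 2 * ℓ - (k + 3 * ℓ) = k * 3 + ℓ * (-1) by ring,
      show 2 * k + 2 * ℓ - (k + 3 * ℓ) = k * 1 + ℓ * (-1) by ring,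
      show 4 * k + 2 * ℓ = k * 4 + ℓ * 2 by ring,
      show 2 * k + 2 * ℓ = k * 2 + ℓ * 2 by ring,
      hsplit, hsplit, hsplit, hsplit, hsplit]
    simp only [zpow_ofNat, zpow_one, zpow_neg_one, pow_one]
  have h2 : magicF (4 * k - 2 * ℓ) (2 * k - 2 * ℓ) (k - 3 * ℓ) t =
      (t ^ k) ^ 5 * (t ^ ℓ)⁻¹ - (t ^ k) ^ 4 * ((t ^ ℓ) ^ 2)⁻¹ - (t ^ k) ^ 2 * ((t ^ ℓ) ^ 2)⁻¹
        - (t ^ k) ^ 3 * (t ^ ℓ) - (t ^ k) * (t ^ ℓ) + 1 := by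
    unfold magicF
    rw [show 4 * k - 2 * ℓ + (2 * k - 2 * ℓ) - (k - 3 * ℓ) = k * 5 + ℓ * (-1) by ring,
      show 4 * k - 2 * ℓ - (k - 3 * ℓ) = k * 3 + ℓ * 1 by ring,
      show 2 * k - 2 * ℓ - (k - 3 * ℓ) = k * 1 + ℓ * 1 by ring,
      show 4 * k - 2 * ℓ = k * 4 + ℓ * (-2) by ring,
      show 2 * k - 2 * ℓ = k * 2 + ℓ * (-2) by ring,
      hsplit, hsplit, hsplit, hsplit, hsplit]
    simp only [zpow_ofNat, zpow_one, zpow_neg_one, zpow_neg, pow_one]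
  set a : ℝ := t ^ k
  set b : ℝ := t ^ ℓ
  set g : ℝ := a + a ^ 3 - b - a ^ 2 * b - a ^ 4 * b + a * b ^ 2 + a ^ 3 * b ^ 2 with hg
  have e1 : b * magicF (4 * k + 2 * ℓ) (2 * k + 2 * ℓ) (k + 3 * ℓ) t = -(1 + a * b) * g := by
    rw [h1, hg]
    field_simp
    ring
  have e2 : b ^ 2 * magicF (4 * k - 2 * ℓ) (2 * k - 2 * ℓ) (k - 3 * ℓ) t = -(a + b) * g := by
    rw [h2, hg]
    field_simp
    ring
  have hf1 : -(1 + a * b) ≠ 0 := by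
    have : (0:ℝ) < 1 + a * b := by positivity
    intro h; nlinarith
  have hf2 : -(a + b) ≠ 0 := by
    have : (0:ℝ) < a + b := by positivity
    intro h; nlinarith
  constructor
  · intro h
    have hg0 : g = 0 := by
      have h' : -(1 + a * b) * g = 0 := by rw [← e1, h, mul_zero]
      exact (mul_eq_zero.mp h').resolve_left hf1
    have h'' : b ^ 2 * magicF (4 * k - 2 * ℓ) (2 * k - 2 * ℓ) (k - 3 * ℓ) t = 0 := by
      rw [e2, hg0, mul_zero]
    exact (mul_eq_zero.mp h'').resolve_left (pow_ne_zero 2 hbne)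
  · intro h
    have hg0 : g = 0 := by
      have h' : -(a + b) * g = 0 := by rw [← e2, h, mul_zero]
      exact (mul_eq_zero.mp h').resolve_left hf2
    have h'' : b * magicF (4 * k + 2 * ℓ) (2 * k + 2 * ℓ) (k + 3 * ℓ) t = 0 := by
      rw [e1, hg0, mul_zero]
    exact (mul_eq_zero.mp h'').resolve_left hbne
end

section
/- The largest real root of t^5 - 2t^3 - 2t^2 + 1 lies strictly between 1.7220 and 1.7221. -/
theorem stmt_4 :
    ∃ r : ℝ, r ^ 5 - 2 * r ^ 3 - 2 * r ^ 2 + 1 = 0 ∧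
      (∀ s : ℝ, s ^ 5 - 2 * s ^ 3 - 2 * s ^ 2 + 1 = 0 → s ≤ r) ∧
      1.7220 < r ∧ r < 1.7221 := by
  set f : ℝ → ℝ := fun t => t ^ 5 - 2 * t ^ 3 - 2 * t ^ 2 + 1 with hf
  have hcont : Continuous f := by fun_prop
  have hfa : f 1.7220 < 0 := by norm_num [hf]
  have hfb : 0 < f 1.7221 := by norm_num [hf]
  obtain ⟨r, hr, hr0⟩ :=
    intermediate_value_Icc (by norm_num : (1.7220:ℝ) ≤ 1.7221)
      hcont.continuousOn ⟨hfa.le, hfb.le⟩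
  have hra : 1.7220 < r := by
    rcases lt_or_eq_of_le hr.1 with h | h
    · exact h
    · exfalso; rw [h] at hfa; linarith
  have hrb : r < 1.7221 := by
    rcases lt_or_eq_of_le hr.2 with h | h
    · exact h
    · exfalso; rw [h] at hr0; linarith
  have hmono : StrictMonoOn f (Set.Ici (1.7220:ℝ)) := by
    have hderiv : ∀ t : ℝ, HasDerivAt f (5 * t ^ 4 - 6 * t ^ 2 - 4 * t) t := by
      intro t
      have h : HasDerivAt (fun t : ℝ => t ^ 5 - 2 * t ^ 3 - 2 * t ^ 2 + 1)
          (5 * t ^ 4 - (2 * (3 * t ^ 2)) - (2 * (2 * t))) t := by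
        have h1 : HasDerivAt (fun t : ℝ => t ^ 5) (5 * t ^ 4) t := by
          simpa using hasDerivAt_pow 5 t
        have h2 : HasDerivAt (fun t : ℝ => t ^ 3) (3 * t ^ 2) t := by
          simpa using hasDerivAt_pow 3 t
        have h3 : HasDerivAt (fun t : ℝ => t ^ 2) (2 * t) t := by
          simpa using hasDerivAt_pow 2 t
        exact (((h1.sub (h2.const_mul 2)).sub (h3.const_mul 2)).add_const 1)
      convert h using 1
      ring
    apply strictMonoOn_of_deriv_pos (convex_Ici _) hcont.continuousOn
    intro t ht
    rw [interior_Ici] at ht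
    have ht' : (1.7220:ℝ) < t := ht
    rw [(hderiv t).deriv]
    nlinarith [sq_nonneg t, sq_nonneg (t - 1.7220), sq_nonneg (t^2 - 2.96)]
  refine ⟨r, hr0, ?_, hra, hrb⟩
  intro s hs
  by_contra h
  push_neg at h
  have : f r < f s := hmono (le_of_lt hra) (le_of_lt (hra.trans h)) h
  rw [hr0] at this
  simp only [hf] at this hs
  linarith
end

section
/- For every even integer g ≥ 2, the polynomial t^{2g+1} - 2t^{g+1} - 2t^g + 1 has a real root strictly greater than 1, and if λ_g denotes its largest real root, then g·log λ_g ≤ log(2 + √3). -/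
/-! With `x = λ^g` the equation reads `λ (x² - 2x) = 2x - 1`. For `λ > 1` this forces
`0 < x² - 2x < 2x - 1`, i.e. `x² - 4x + 1 < 0`, so `x` lies below the larger root `2 + √3`
of that quadratic. -/

lemma exists_one_lt_root (g : ℕ) (hg : 1 ≤ g) :
    ∃ l : ℝ, 1 < l ∧ l ^ (2 * g + 1) - 2 * l ^ (g + 1) - 2 * l ^ g + 1 = 0 := by
  set F : ℝ → ℝ := fun t => t ^ (2 * g + 1) - 2 * t ^ (g + 1) - 2 * t ^ g + 1
  have hF1 : F 1 < 0 := by norm_num [F]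
  have hF3 : 0 < F 3 := by
    have h3 : (3 : ℝ) ≤ 3 ^ g := le_self_pow₀ (by norm_num) (by omega)
    have hF3_eq : F 3 = 3 * (3 ^ g) ^ 2 - 8 * 3 ^ g + 1 := by simp only [F]; ring
    nlinarith
  obtain ⟨l, hl, hFl⟩ :=
    intermediate_value_Ioo (by norm_num) (by fun_prop : ContinuousOn F (Set.Icc 1 3)) ⟨hF1, hF3⟩
  exact ⟨l, hl.1, hFl⟩

lemma lt_two_add_sqrt_three_of_sq_sub_four_mul_add_one_neg {x : ℝ} (hx : x ^ 2 - 4 * x + 1 < 0) :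
    x < 2 + Real.sqrt 3 := by
  have hsq : Real.sqrt 3 ^ 2 = 3 := Real.sq_sqrt (by norm_num)
  nlinarith [Real.sqrt_nonneg 3]

lemma pow_lt_two_add_sqrt_three_of_root {g : ℕ} {l : ℝ} (hl : 1 < l)
    (hroot : l ^ (2 * g + 1) - 2 * l ^ (g + 1) - 2 * l ^ g + 1 = 0) :
    l ^ g < 2 + Real.sqrt 3 := by
  set x := l ^ g with hx
  have hx1 : 1 ≤ x := one_le_pow₀ hl.le
  have hkey : l * (x ^ 2 - 2 * x) = 2 * x - 1 := by rw [hx]; linear_combination hroot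
  have hpos : 0 < x ^ 2 - 2 * x := by
    by_contra! h
    nlinarith
  apply lt_two_add_sqrt_three_of_sq_sub_four_mul_add_one_neg
  nlinarith

theorem stmt_7_general (g : ℕ) (hg : 2 ≤ g) :
    (∃ l : ℝ, 1 < l ∧ l ^ (2 * g + 1) - 2 * l ^ (g + 1) - 2 * l ^ g + 1 = 0) ∧
    (∀ l : ℝ,
      (l ^ (2 * g + 1) - 2 * l ^ (g + 1) - 2 * l ^ g + 1 = 0 ∧
        ∀ s : ℝ, s ^ (2 * g + 1) - 2 * s ^ (g + 1) - 2 * s ^ g + 1 = 0 → s ≤ l) →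
      (g : ℝ) * Real.log l ≤ Real.log (2 + Real.sqrt 3)) := by
  obtain ⟨r, hr1, hr⟩ := exists_one_lt_root g (by omega)
  refine ⟨⟨r, hr1, hr⟩, ?_⟩
  rintro l ⟨hl, hmax⟩
  have hl1 : 1 < l := hr1.trans_le (hmax r hr)
  rw [← Real.log_pow]
  exact Real.log_le_log (by positivity) (pow_lt_two_add_sqrt_three_of_root hl1 hl).le

theorem stmt_7 (g : ℕ) (hg : 2 ≤ g) (hge : Even g) :
    (∃ l : ℝ, 1 < l ∧ l ^ (2 * g + 1) - 2 * l ^ (g + 1) - 2 * l ^ g + 1 = 0) ∧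
    (∀ l : ℝ,
      (l ^ (2 * g + 1) - 2 * l ^ (g + 1) - 2 * l ^ g + 1 = 0 ∧
        ∀ s : ℝ, s ^ (2 * g + 1) - 2 * s ^ (g + 1) - 2 * s ^ g + 1 = 0 → s ≤ l) →
      (g : ℝ) * Real.log l ≤ Real.log (2 + Real.sqrt 3)) :=
  stmt_7_general g hg
end

section
/- Let p be a positive integer and q an integer with gcd(p,q) = 1, p/q ≠ 1. For any primitive integer triple (x,y,z) with -px = q(y+z), one has gcd(y, z+x) + gcd(z, x+y) ≤ 2|p| + 2|q|. -/
/-!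
From `-p x = q (y + z)` and `gcd(p, q) = 1` we get `y + z = p k` and `x = -q k`. Every common
divisor of `y` and `k` then divides `x` and `z`, so primitivity makes `y` coprime to `k`. Since
`z + x = (p - q) k - y`, this gives `gcd(y, z + x) = gcd(y, p - q) ≤ |p| + |q|`, and symmetrically
for `gcd(z, x + y)`.
-/

lemma Int.gcd_mul_sub_le_natAbs {a k : ℤ} (m : ℤ) (hak : Int.gcd a k = 1) (hm : m ≠ 0) :
    Int.gcd a (m * k - a) ≤ m.natAbs := by
  rw [Int.gcd_sub_self_right, Int.gcd_mul_left_right_of_gcd_eq_one hak]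
  exact Int.gcd_le_natAbs_right a hm

lemma Int.gcd_eq_one_of_dvd_of_dvd_add {x y z k : ℤ} (hprim : Int.gcd (Int.gcd x y) z = 1)
    (hkx : k ∣ x) (hkyz : k ∣ y + z) : Int.gcd y k = 1 := by
  have hdy : (Int.gcd y k : ℤ) ∣ y := Int.gcd_dvd_left y k
  have hdk : (Int.gcd y k : ℤ) ∣ k := Int.gcd_dvd_right y k
  have hdz : (Int.gcd y k : ℤ) ∣ z := by
    simpa using (hdk.trans hkyz).sub hdy
  have hd : Int.gcd y k ∣ Int.gcd (Int.gcd x y) z :=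
    Int.dvd_gcd (Int.dvd_coe_gcd (hdk.trans hkx) hdy) hdz
  rwa [hprim, Nat.dvd_one] at hd

lemma exists_eq_mul_of_neg_mul_eq_mul {p q x s : ℤ} (hp : p ≠ 0) (hpq : Int.gcd p q = 1)
    (heq : -p * x = q * s) : ∃ k, s = p * k ∧ x = -(q * k) := by
  obtain ⟨k, hk⟩ : p ∣ s :=
    (Int.isCoprime_iff_gcd_eq_one.mpr hpq).dvd_of_dvd_mul_left ⟨-x, by linear_combination -heq⟩
  refine ⟨k, hk, mul_left_cancel₀ hp ?_⟩
  linear_combination -heq - q * hk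

theorem stmt_11 (p q : ℤ) (hp : 0 < p) (hpq : Int.gcd p q = 1)
    (hne : (p : ℚ) / (q : ℚ) ≠ 1)
    (x y z : ℤ) (hprim : Int.gcd (Int.gcd x y) z = 1)
    (heq : -p * x = q * (y + z)) :
    Int.gcd y (z + x) + Int.gcd z (x + y) ≤ 2 * p.natAbs + 2 * q.natAbs := by
  obtain ⟨k, hk, hx⟩ := exists_eq_mul_of_neg_mul_eq_mul hp.ne' hpq heq
  have hpq_ne : p - q ≠ 0 := by
    intro h
    obtain rfl : q = p := (sub_eq_zero.mp h).symm
    exact hne (div_self (by exact_mod_cast hp.ne'))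
  have hkx : k ∣ x := ⟨-q, by linear_combination hx⟩
  have hyk : Int.gcd y k = 1 :=
    Int.gcd_eq_one_of_dvd_of_dvd_add hprim hkx ⟨p, by linear_combination hk⟩
  have hzk : Int.gcd z k = 1 := by
    refine Int.gcd_eq_one_of_dvd_of_dvd_add (y := z) (z := y) ?_ hkx ⟨p, by linear_combination hk⟩
    rwa [Int.gcd_assoc, Int.gcd_comm z, ← Int.gcd_assoc]
  have hzx : z + x = (p - q) * k - y := by linear_combination hk + hx
  have hxy : x + y = (p - q) * k - z := by linear_combination hk + hx
  rw [hzx, hxy]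
  have hy := Int.gcd_mul_sub_le_natAbs (p - q) hyk hpq_ne
  have hz := Int.gcd_mul_sub_le_natAbs (p - q) hzk hpq_ne
  have hsub := Int.natAbs_sub_le p q
  omega
end

section
/- For integers k ≥ 2, define λ_{(k,ℓ)} as the largest real root of f_{(k,ℓ)}(t) = t^{2k} - t^{k+ℓ} - t^k - t^{k-ℓ} + 1 for 0 < ℓ < k. Then λ_{(k,ℓ)} > 1 exists (the polynomial has a root greater than 1), and for fixed ℓ = 1, the sequence k·log λ_{(k,1)} converges to log((3+√5)/2) as k → ∞. -/
/-!
The polynomial equals `-1` at `1` and is positive at `3`, so a root `> 1` exists by the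
intermediate value theorem. For `ℓ = 1`, dividing by `t ^ k` shows that a root `x > 1` makes
`y = x ^ k` the larger root of `y ^ 2 - (x + 1 + x⁻¹) y + 1`. This forces `y < 4`, hence `x → 1`
by Bernoulli's inequality, so the middle coefficient tends to `3` and `x ^ k` tends to the larger
root `(3 + √5) / 2` of `y ^ 2 - 3 y + 1`; take logarithms.
-/

open Filter Topology

def lanneauThiffeault (k ℓ : ℕ) (t : ℝ) : ℝ :=
  t ^ (2 * k) - t ^ (k + ℓ) - t ^ k - t ^ (k - ℓ) + 1

lemma lanneauThiffeault_one_left (k ℓ : ℕ) : lanneauThiffeault k ℓ 1 = -1 := by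
  norm_num [lanneauThiffeault]

lemma lanneauThiffeault_three_pos {k ℓ : ℕ} (hℓk : ℓ < k) : 0 < lanneauThiffeault k ℓ 3 := by
  have hle : ∀ n ≤ 2 * k - 1, (3 : ℝ) ^ n ≤ 3 ^ (2 * k - 1) :=
    fun n hn => pow_le_pow_right₀ (by norm_num) hn
  have htop : (3 : ℝ) ^ (2 * k) = 3 ^ (2 * k - 1) * 3 := by
    rw [← pow_succ]; congr 1; omega
  unfold lanneauThiffeault
  linarith [hle (k + ℓ) (by omega), hle k (by omega), hle (k - ℓ) (by omega)]

lemma exists_one_lt_lanneauThiffeault_eq_zero {k ℓ : ℕ} (hℓk : ℓ < k) :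
    ∃ t : ℝ, 1 < t ∧ lanneauThiffeault k ℓ t = 0 := by
  have hcont : ContinuousOn (lanneauThiffeault k ℓ) (Set.Icc 1 3) := by
    unfold lanneauThiffeault; fun_prop
  have hzero : (0 : ℝ) ∈ Set.Ioo (lanneauThiffeault k ℓ 1) (lanneauThiffeault k ℓ 3) := by
    rw [lanneauThiffeault_one_left]
    exact ⟨neg_one_lt_zero, lanneauThiffeault_three_pos hℓk⟩
  obtain ⟨t, ht, hroot⟩ := intermediate_value_Ioo (by norm_num) hcont hzero
  exact ⟨t, ht.1, hroot⟩

lemma lanneauThiffeault_one_right_eq {k : ℕ} (hk : 1 ≤ k) {x : ℝ} (hx : x ≠ 0) :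
    lanneauThiffeault k 1 x = (x ^ k) ^ 2 - (x + 1 + x⁻¹) * x ^ k + 1 := by
  rw [lanneauThiffeault, pow_sub₀ x hx hk, pow_add, two_mul, pow_add]
  ring

/-- The larger root of `y ^ 2 - c y + 1`, whose roots are mutually inverse. -/
lemma eq_add_sqrt_div_two_of_sq_sub_mul_add_one_eq_zero {y c : ℝ} (hy : 1 ≤ y)
    (hroot : y ^ 2 - c * y + 1 = 0) : y = (c + √(c ^ 2 - 4)) / 2 := by
  have hdisc : c ^ 2 - 4 = (2 * y - c) ^ 2 := by linear_combination (-4 : ℝ) * hroot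
  have hnonneg : 0 ≤ 2 * y - c := by nlinarith
  rw [hdisc, Real.sqrt_sq hnonneg]
  ring

lemma pow_lt_four_of_lanneauThiffeault_eq_zero {k : ℕ} (hk : 2 ≤ k) {x : ℝ} (hx : 1 < x)
    (hroot : lanneauThiffeault k 1 x = 0) : x ^ k < 4 := by
  rw [lanneauThiffeault_one_right_eq (by omega) (by positivity)] at hroot
  have hy : 1 < x ^ k := one_lt_pow₀ hx (by omega)
  have hinv : x⁻¹ < 1 := inv_lt_one_of_one_lt₀ hx
  have hyc : x ^ k < x + 1 + x⁻¹ := by nlinarith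
  have hsq : x ^ 2 ≤ x ^ k := pow_le_pow_right₀ hx.le hk
  have hx2 : x < 2 := by nlinarith
  linarith

/-- Bernoulli's inequality gives `x n - 1 ≤ C / n`. -/
lemma tendsto_one_of_one_le_of_pow_le {x : ℕ → ℝ} {C : ℝ}
    (hx : ∀ᶠ n in atTop, 1 ≤ x n ∧ x n ^ n ≤ C) : Tendsto x atTop (𝓝 1) := by
  have hsub : Tendsto (fun n => x n - 1) atTop (𝓝 0) := by
    refine tendsto_of_tendsto_of_tendsto_of_le_of_le' tendsto_const_nhds
      (tendsto_const_div_atTop_nhds_zero_nat C) ?_ ?_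
    · filter_upwards [hx] with n hn
      linarith [hn.1]
    · filter_upwards [hx, eventually_gt_atTop 0] with n hn hn0
      have hbern := one_add_mul_sub_le_pow (by linarith [hn.1] : -1 ≤ x n) n
      rw [le_div_iff₀ (by positivity)]
      linarith [hn.2]
  simpa using hsub.add_const 1

lemma tendsto_pow_of_lanneauThiffeault_eq_zero {L : ℕ → ℝ}
    (hL : ∀ᶠ k in atTop, 1 < L k ∧ lanneauThiffeault k 1 (L k) = 0) :
    Tendsto (fun k => L k ^ k) atTop (𝓝 ((3 + √5) / 2)) := by
  have hroot : ∀ᶠ k in atTop, 1 < L k ∧ lanneauThiffeault k 1 (L k) = 0 ∧ 2 ≤ k :=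
    (hL.and (eventually_ge_atTop 2)).mono fun _ h => ⟨h.1.1, h.1.2, h.2⟩
  have hL1 : Tendsto L atTop (𝓝 1) := tendsto_one_of_one_le_of_pow_le (C := 4) <|
    hroot.mono fun k ⟨hx, hk0, hk⟩ =>
      ⟨hx.le, (pow_lt_four_of_lanneauThiffeault_eq_zero hk hx hk0).le⟩
  have hc : Tendsto (fun k => L k + 1 + (L k)⁻¹) atTop (𝓝 3) := by
    have := (hL1.add_const 1).add (hL1.inv₀ one_ne_zero)
    norm_num at this
    exact this
  have hlim : Tendsto (fun k => (L k + 1 + (L k)⁻¹ + √((L k + 1 + (L k)⁻¹) ^ 2 - 4)) / 2) atTop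
      (𝓝 ((3 + √5) / 2)) := by
    have hdisc := ((hc.pow 2).sub_const 4).sqrt
    norm_num at hdisc
    exact (hc.add hdisc).div_const 2
  refine hlim.congr' (hroot.mono fun k ⟨hx, hk0, hk⟩ => ?_)
  rw [lanneauThiffeault_one_right_eq (by omega) (by positivity)] at hk0
  exact (eq_add_sqrt_div_two_of_sq_sub_mul_add_one_eq_zero (one_le_pow₀ hx.le) hk0).symm

theorem stmt_19 :
    (∀ k ℓ : ℕ, 2 ≤ k → 0 < ℓ → ℓ < k →
      ∃ t : ℝ, 1 < t ∧
        t ^ (2 * k) - t ^ (k + ℓ) - t ^ k - t ^ (k - ℓ) + 1 = 0) ∧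
    (∀ L : ℕ → ℝ,
      (∀ k : ℕ, 2 ≤ k →
        1 < L k ∧
        (L k) ^ (2 * k) - (L k) ^ (k + 1) - (L k) ^ k - (L k) ^ (k - 1) + 1 = 0 ∧
        (∀ s : ℝ, s ^ (2 * k) - s ^ (k + 1) - s ^ k - s ^ (k - 1) + 1 = 0 → s ≤ L k)) →
      Tendsto (fun k : ℕ => (k : ℝ) * Real.log (L k)) atTop
        (nhds (Real.log ((3 + Real.sqrt 5) / 2)))) := by
  refine ⟨fun k ℓ _ _ hℓk => exists_one_lt_lanneauThiffeault_eq_zero hℓk, fun L hL => ?_⟩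
  have hroot : ∀ᶠ k in atTop, 1 < L k ∧ lanneauThiffeault k 1 (L k) = 0 :=
    (eventually_ge_atTop 2).mono fun k hk => ⟨(hL k hk).1, (hL k hk).2.1⟩
  have hlog := (Real.continuousAt_log (by positivity)).tendsto.comp
    (tendsto_pow_of_lanneauThiffeault_eq_zero hroot)
  simpa only [Function.comp_def, Real.log_pow] using hlog
end
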